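/- arXiv:2212.07574 — 2 statements merged into one kernel-verified Lean document; each statement's English description precedes it below -/
import Mathlib

section
/- Let X₊ be an n×ℓ complex matrix whose columns are eigenvectors of a real skew-symmetric matrix A corresponding to eigenvalues iσ₁,…,iσ_ℓ with all σⱼ > 0, i.e., A X₊ = X₊ · (i Σ) where Σ is diagonal with positive entries. Then X₊ᵀ X₊ = 0 (transpose without conjugation). -/
/-! Write `M = X₊ᵀ X₊` and `D = iΣ`, so that `A X₊ = X₊ D`. Evaluating the bilinear expression
`X₊ᵀ A X₊` once through `A X₊` and once through `X₊ᵀ A = -(A X₊)ᵀ` gives `M D = -D M`,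
i.e. `(i σⱼ + i σₖ) Mⱼₖ = 0`, and `σⱼ + σₖ > 0` forces `Mⱼₖ = 0`. -/

open Matrix

namespace Matrix

variable {m n R : Type*} [Fintype m] [Fintype n]

theorem transpose_mul_self_mul_eq_neg_of_transpose_eq_neg [CommRing R] {B : Matrix n n R}
    (hB : Bᵀ = -B) {X : Matrix n m R} {D : Matrix m m R} (hD : Dᵀ = D) (hBX : B * X = X * D) :
    Xᵀ * X * D = -(D * (Xᵀ * X)) :=
  calc Xᵀ * X * D = Xᵀ * (B * X) := by rw [hBX, Matrix.mul_assoc]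
    _ = -((B * X)ᵀ * X) := by
      rw [transpose_mul, hB, Matrix.mul_neg, Matrix.neg_mul, neg_neg, Matrix.mul_assoc]
    _ = -(D * (Xᵀ * X)) := by rw [hBX, transpose_mul, hD, Matrix.mul_assoc]

theorem eq_zero_of_mul_diagonal_eq_neg_diagonal_mul [DecidableEq m] [CommRing R]
    [NoZeroDivisors R] {M : Matrix m m R} {d : m → R} (hd : ∀ j k, d j + d k ≠ 0)
    (hM : M * diagonal d = -(diagonal d * M)) : M = 0 := by
  ext j k
  have hjk : (d j + d k) * M j k = 0 := by
    have := congr_fun₂ hM j k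
    simp only [mul_diagonal, diagonal_mul, neg_apply] at this
    linear_combination this
  exact (mul_eq_zero.1 hjk).resolve_left (hd j k)

end Matrix

theorem skew_symmetric_eigenvector_matrix_T_orthogonal
    {n ℓ : ℕ} (A : Matrix (Fin n) (Fin n) ℝ) (hA : Aᵀ = -A)
    (σ : Fin ℓ → ℝ) (hσ : ∀ j, 0 < σ j)
    (X : Matrix (Fin n) (Fin ℓ) ℂ)
    (heig : (A.map (Complex.ofReal ·)) * X =
      Complex.I • (X * (Matrix.diagonal σ).map (Complex.ofReal ·))) :
    Xᵀ * X = 0 := by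
  set d : Fin ℓ → ℂ := fun j => Complex.I * σ j
  have hAc : (A.map (Complex.ofReal ·))ᵀ = -A.map (Complex.ofReal ·) := by
    rw [← transpose_map, hA, Matrix.map_neg _ Complex.ofReal_neg]
  have hXd : A.map (Complex.ofReal ·) * X = X * diagonal d := by
    rw [heig, diagonal_map Complex.ofReal_zero, ← Matrix.mul_smul, ← diagonal_smul]
    rfl
  have hd : ∀ j k, d j + d k ≠ 0 := fun j k => by
    simp only [d, ← mul_add, ← Complex.ofReal_add]
    exact mul_ne_zero Complex.I_ne_zero (Complex.ofReal_ne_zero.2 (add_pos (hσ j) (hσ k)).ne')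
  exact eq_zero_of_mul_diagonal_eq_neg_diagonal_mul hd
    (transpose_mul_self_mul_eq_neg_of_transpose_eq_neg hAc (diagonal_transpose d) hXd)
end

section
/- Let B be a real m×m upper bidiagonal matrix with singular triplet (θ, c, d): B d = θ c and Bᵀ c = θ d with ‖c‖ = ‖d‖ = 1. Let P ∈ ℝ^{n×m}, Q ∈ ℝ^{n×(m+1)} satisfy A Q_m = P B and A P = −Q_m Bᵀ − γ q_{m+1} e_mᵀ, where Q_m denotes the first m columns of Q, q_{m+1} its last column, with Q orthonormal. Set ũ = P c, ṽ = Q_m d. Then ‖A ũ + θ ṽ‖² + ‖A ṽ − θ ũ‖² = γ² |e_mᵀ c|². -/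
/-! With `ũ = P c` and `ṽ = Q_m d`, the relation `A Q_m = P B` together with `B d = θ c` makes
`A ṽ - θ ũ = P (B d - θ c)` vanish, while `A P = -Q_m Bᵀ - γ q eₘᵀ` together with `Bᵀ c = θ d`
collapses `A ũ + θ ṽ` to `-γ (eₘᵀ c) q`, whose squared norm is `γ² (eₘᵀ c)²` since `q` is a
unit vector. -/

open Matrix

section RitzResidual

variable {ι κ R : Type*} [Fintype ι] [Fintype κ] [CommRing R]
  (A : Matrix ι ι R) (B : Matrix κ κ R) (P Qm : Matrix ι κ R) (θ : R) (c d : κ → R)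

theorem mulVec_sub_smul_eq_zero_of_mul_eq (hAQ : A * Qm = P * B) (hBd : B *ᵥ d = θ • c) :
    A *ᵥ (Qm *ᵥ d) - θ • (P *ᵥ c) = 0 := by
  rw [mulVec_mulVec, hAQ, ← mulVec_mulVec, hBd, mulVec_smul, sub_self]

theorem mulVec_add_smul_eq_smul_of_mul_eq [DecidableEq κ] (γ : R) (q : ι → R) (j : κ)
    (hAP : A * P = -(Qm * Bᵀ) - γ • vecMulVec q (Pi.single j 1)) (hBtc : Bᵀ *ᵥ c = θ • d) :
    A *ᵥ (P *ᵥ c) + θ • (Qm *ᵥ d) = (-(γ * c j)) • q := by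
  rw [mulVec_mulVec, hAP, sub_mulVec, neg_mulVec, ← mulVec_mulVec, hBtc, mulVec_smul,
    smul_mulVec, vecMulVec_mulVec, single_dotProduct, one_mul, op_smul_eq_smul, smul_smul,
    neg_smul]
  abel

end RitzResidual

theorem sum_sq_smul_of_dotProduct_self_eq_one {ι R : Type*} [Fintype ι] [CommRing R]
    (a : R) {q : ι → R} (hq : q ⬝ᵥ q = 1) :
    ∑ i, ((a • q) i) ^ 2 = a ^ 2 := by
  simp only [Pi.smul_apply, smul_eq_mul, mul_pow, ← Finset.mul_sum, sq (q _)]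
  rw [← dotProduct, hq, mul_one]

theorem ritz_residual_norm_formula_general
    {n m : ℕ} (A : Matrix (Fin n) (Fin n) ℝ)
    (B : Matrix (Fin (m + 1)) (Fin (m + 1)) ℝ)
    (θ γ : ℝ) (c d : Fin (m + 1) → ℝ)
    (hBd : B *ᵥ d = θ • c) (hBtc : Bᵀ *ᵥ c = θ • d)
    (P Qm : Matrix (Fin n) (Fin (m + 1)) ℝ) (q : Fin n → ℝ)
    (hq : q ⬝ᵥ q = 1)
    (hAQ : A * Qm = P * B)
    (hAP : A * P = -(Qm * Bᵀ) - γ • Matrix.vecMulVec q (Pi.single (Fin.last m) 1)) :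
    (∑ i, ((A *ᵥ (P *ᵥ c) + θ • (Qm *ᵥ d)) i) ^ 2) +
      (∑ i, ((A *ᵥ (Qm *ᵥ d) - θ • (P *ᵥ c)) i) ^ 2) =
        γ ^ 2 * (c (Fin.last m)) ^ 2 := by
  rw [mulVec_add_smul_eq_smul_of_mul_eq A B P Qm θ c d γ q _ hAP hBtc,
    mulVec_sub_smul_eq_zero_of_mul_eq A B P Qm θ c d hAQ hBd,
    sum_sq_smul_of_dotProduct_self_eq_one _ hq]
  simp [mul_pow]

theorem ritz_residual_norm_formula
    {n m : ℕ} (A : Matrix (Fin n) (Fin n) ℝ) (hA : Aᵀ = -A)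
    (B : Matrix (Fin (m + 1)) (Fin (m + 1)) ℝ)
    (hbidiag : ∀ i j : Fin (m + 1),
      ((j : ℕ) < (i : ℕ) ∨ (i : ℕ) + 1 < (j : ℕ)) → B i j = 0)
    (θ γ : ℝ) (c d : Fin (m + 1) → ℝ)
    (hBd : B *ᵥ d = θ • c) (hBtc : Bᵀ *ᵥ c = θ • d)
    (hc : c ⬝ᵥ c = 1) (hd : d ⬝ᵥ d = 1)
    (P Qm : Matrix (Fin n) (Fin (m + 1)) ℝ) (q : Fin n → ℝ)
    (hQ : Qmᵀ * Qm = 1) (hq : q ⬝ᵥ q = 1) (hQq : Qmᵀ *ᵥ q = 0)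
    (hAQ : A * Qm = P * B)
    (hAP : A * P = -(Qm * Bᵀ) - γ • Matrix.vecMulVec q (Pi.single (Fin.last m) 1)) :
    (∑ i, ((A *ᵥ (P *ᵥ c) + θ • (Qm *ᵥ d)) i) ^ 2) +
      (∑ i, ((A *ᵥ (Qm *ᵥ d) - θ • (P *ᵥ c)) i) ^ 2) =
        γ ^ 2 * (c (Fin.last m)) ^ 2 :=
  ritz_residual_norm_formula_general A B θ γ c d hBd hBtc P Qm q hq hAQ hAP
end
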